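/- Fix n ∈ ℕ and α, β, c ∈ ℝ with 2n+α+β ≠ 0 and 2n+α+β+2 ≠ 0. For ε > 0 set q = −e^ε, a = −e^{εα}, b = −e^{εβ}, and define the monic big q-Jacobi recurrence coefficients A_n(ε) = (1−aq^{n+1})(1−abq^{n+1})(1−cq^{n+1})/((1−abq^{2n+1})(1−abq^{2n+2})) and C_n(ε) = −aq^{n+1}(1−q^n)(c−abq^n)(1−bq^n)/((1−abq^{2n})(1−abq^{2n+1})). Then as ε → 0⁺, A_n(ε) tends to A_n^J and C_n(ε) tends to C_n^J, where A_n^J = (1+c)(n+α+1)/(2n+α+β+2) if n is even, A_n^J = (1−c)(n+α+β+1)/(2n+α+β+2) if n is odd, C_n^J = (1−c)n/(2n+α+β) if n is even, and C_n^J = (1+c)(n+β)/(2n+α+β) if n is odd. -/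
import Mathlib


open Filter

lemma expTendsto (x : ℝ) : Tendsto (fun ε : ℝ => Real.exp (ε * x)) (nhdsWithin 0 (Set.Ioi 0)) (nhds 1) := by
  have h : Continuous fun ε : ℝ => Real.exp (ε * x) := by continuity
  have h2 : Tendsto (fun ε : ℝ => Real.exp (ε * x)) (nhdsWithin (0:ℝ) (Set.Ioi 0)) (nhds (Real.exp (0 * x))) :=
    (h.tendsto 0).mono_left nhdsWithin_le_nhds
  simpa using h2

lemma onePlusTendsto (x : ℝ) : Tendsto (fun ε : ℝ => 1 + Real.exp (ε * x)) (nhdsWithin 0 (Set.Ioi 0)) (nhds 2) := by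
  have := (expTendsto x).const_add 1
  norm_num at this
  exact this

lemma slopeTendsto (x : ℝ) : Tendsto (fun ε : ℝ => (1 - Real.exp (ε * x)) / ε) (nhdsWithin 0 (Set.Ioi 0)) (nhds (-x)) := by
  have hd : HasDerivAt (fun ε : ℝ => 1 - Real.exp (ε * x)) (-x) 0 := by
    have h1 : HasDerivAt (fun ε : ℝ => ε * x) x 0 := by simpa using (hasDerivAt_id (0:ℝ)).mul_const x
    have := (h1.exp).const_sub 1
    simpa using this
  have hs := hasDerivAt_iff_tendsto_slope.mp hd
  have hmono : nhdsWithin (0:ℝ) (Set.Ioi 0) ≤ nhdsWithin 0 {(0:ℝ)}ᶜ := by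
    apply nhdsWithin_mono
    intro y hy
    exact ne_of_gt hy
  refine (hs.mono_left hmono).congr' ?_
  filter_upwards [self_mem_nhdsWithin] with ε hε
  have : ε ≠ 0 := ne_of_gt hε
  simp [slope, this]
  ring

lemma negexp_pow (ε : ℝ) (k : ℕ) : (-Real.exp ε)^k = (-1:ℝ)^k * Real.exp (ε * k) := by
  rw [neg_pow, ← Real.exp_nat_mul, mul_comm ε (k:ℝ)]


lemma div_congr_eps {e a b c d : ℝ} (he : e ≠ 0) (ha : a * e = c) (hb : b * e = d) :
    a / b = c / d := by
  rw [← ha, ← hb, mul_div_mul_right _ _ he]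

/-- the `q → -1` limit of the monic big `q`-Jacobi recurrence coefficients
`Aₙ(ε)`, `Cₙ(ε)` (with `q = -e^ε`, `a = -e^{εα}`, `b = -e^{εβ}`) yields the recurrence
coefficients of the monic big `-1` Jacobi polynomials. -/
theorem bigQJacobi_to_bigM1Jacobi_recurrence_limit
    (n : ℕ) (α β c : ℝ)
    (h1 : 2 * (n : ℝ) + α + β ≠ 0) (h2 : 2 * (n : ℝ) + α + β + 2 ≠ 0) :
    Tendsto (fun ε : ℝ =>
        let q := -Real.exp ε;
        let a := -Real.exp (ε * α);
        let b := -Real.exp (ε * β);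
        (1 - a * q ^ (n + 1)) * (1 - a * b * q ^ (n + 1)) * (1 - c * q ^ (n + 1)) /
          ((1 - a * b * q ^ (2 * n + 1)) * (1 - a * b * q ^ (2 * n + 2))))
      (nhdsWithin 0 (Set.Ioi 0))
      (nhds (if Even n then (1 + c) * ((n : ℝ) + α + 1) / (2 * (n : ℝ) + α + β + 2)
             else (1 - c) * ((n : ℝ) + α + β + 1) / (2 * (n : ℝ) + α + β + 2))) ∧
    Tendsto (fun ε : ℝ =>
        let q := -Real.exp ε;
        let a := -Real.exp (ε * α);
        let b := -Real.exp (ε * β);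
        -a * q ^ (n + 1) * (1 - q ^ n) * (c - a * b * q ^ n) * (1 - b * q ^ n) /
          ((1 - a * b * q ^ (2 * n)) * (1 - a * b * q ^ (2 * n + 1))))
      (nhdsWithin 0 (Set.Ioi 0))
      (nhds (if Even n then (1 - c) * (n : ℝ) / (2 * (n : ℝ) + α + β)
             else (1 + c) * ((n : ℝ) + β) / (2 * (n : ℝ) + α + β))) := by
  have p2 : ((-1:ℝ))^(2*n+1) = -1 := Odd.neg_one_pow ⟨n, by ring⟩
  have p3 : ((-1:ℝ))^(2*n+2) = 1 := Even.neg_one_pow ⟨n+1, by ring⟩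
  have p4 : ((-1:ℝ))^(2*n) = 1 := Even.neg_one_pow ⟨n, by ring⟩
  have hdA : α + β + (2*(n:ℝ)+2) ≠ 0 := fun h => h2 (by linarith)
  have hdC : α + β + 2*(n:ℝ) ≠ 0 := fun h => h1 (by linarith)
  rcases Nat.even_or_odd n with hn | hn
  · have p1 : ((-1:ℝ))^(n+1) = -1 := Odd.neg_one_pow (Even.add_one hn)
    have p5 : ((-1:ℝ))^n = 1 := Even.neg_one_pow hn
    simp only [if_pos hn]
    constructor
    · have key : Tendsto (fun ε : ℝ =>
          ((1 - Real.exp (ε*(α+((n:ℝ)+1))))/ε * (1 + Real.exp (ε*(α+β+((n:ℝ)+1)))) *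
            (1 + c * Real.exp (ε*((n:ℝ)+1)))) /
          ((1 + Real.exp (ε*(α+β+(2*(n:ℝ)+1)))) * ((1 - Real.exp (ε*(α+β+(2*(n:ℝ)+2))))/ε)))
          (nhdsWithin 0 (Set.Ioi 0))
          (nhds ((-(α+((n:ℝ)+1)) * 2 * (1 + c*1)) / (2 * -(α+β+(2*(n:ℝ)+2))))) := by
        refine Tendsto.div
          (((slopeTendsto _).mul (onePlusTendsto _)).mul
            ((tendsto_const_nhds.mul (expTendsto _)).const_add 1))
          ((onePlusTendsto _).mul (slopeTendsto _)) ?_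
        exact mul_ne_zero two_ne_zero (neg_ne_zero.mpr hdA)
      have hval : (-(α+((n:ℝ)+1)) * 2 * (1 + c*1)) / (2 * -(α+β+(2*(n:ℝ)+2)))
          = (1 + c) * ((n : ℝ) + α + 1) / (2 * (n : ℝ) + α + β + 2) := by
        rw [div_eq_div_iff (by exact mul_ne_zero two_ne_zero (neg_ne_zero.mpr hdA)) h2]
        ring
      rw [hval] at key
      refine Tendsto.congr' ?_ key
      filter_upwards [self_mem_nhdsWithin] with ε hε
      have hε0 : ε ≠ 0 := ne_of_gt hε
      have s : ∀ t u : ℝ, Real.exp (ε*(t+u)) = Real.exp (ε*t) * Real.exp (ε*u) :=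
        fun t u => by rw [← Real.exp_add, mul_add]
      simp only [negexp_pow, p1, p2, p3]
      push_cast
      rw [s (α+β) (2*(n:ℝ)+2), s (α+β) (2*(n:ℝ)+1), s (α+β) ((n:ℝ)+1), s α ((n:ℝ)+1), s α β]
      refine div_congr_eps hε0 ?_ ?_ <;> (field_simp; try ring)
    · have key : Tendsto (fun ε : ℝ =>
          (-Real.exp (ε*(α+((n:ℝ)+1)))) * ((1 - Real.exp (ε*(n:ℝ)))/ε) *
            (c - Real.exp (ε*(α+β+(n:ℝ)))) * (1 + Real.exp (ε*(β+(n:ℝ)))) /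
          (((1 - Real.exp (ε*(α+β+2*(n:ℝ))))/ε) * (1 + Real.exp (ε*(α+β+(2*(n:ℝ)+1))))))
          (nhdsWithin 0 (Set.Ioi 0))
          (nhds ((-1 * -(n:ℝ) * (c - 1) * 2) / (-(α+β+2*(n:ℝ)) * 2))) := by
        refine Tendsto.div
          ((((expTendsto _).neg.mul (slopeTendsto _)).mul
            (tendsto_const_nhds.sub (expTendsto _))).mul (onePlusTendsto _))
          ((slopeTendsto _).mul (onePlusTendsto _)) ?_
        exact mul_ne_zero (neg_ne_zero.mpr hdC) two_ne_zero
      have hval : (-1 * -(n:ℝ) * (c - 1) * 2) / (-(α+β+2*(n:ℝ)) * 2)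
          = (1 - c) * (n : ℝ) / (2 * (n : ℝ) + α + β) := by
        rw [div_eq_div_iff (by exact mul_ne_zero (neg_ne_zero.mpr hdC) two_ne_zero) h1]
        ring
      rw [hval] at key
      refine Tendsto.congr' ?_ key
      filter_upwards [self_mem_nhdsWithin] with ε hε
      have hε0 : ε ≠ 0 := ne_of_gt hε
      have s : ∀ t u : ℝ, Real.exp (ε*(t+u)) = Real.exp (ε*t) * Real.exp (ε*u) :=
        fun t u => by rw [← Real.exp_add, mul_add]
      simp only [negexp_pow, p1, p2, p4, p5]
      push_cast
      rw [s (α+β) (2*(n:ℝ)), s (α+β) (2*(n:ℝ)+1), s (α+β) ((n:ℝ)), s α ((n:ℝ)+1),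
        s β ((n:ℝ)), s α β]
      refine div_congr_eps hε0 ?_ ?_ <;> (field_simp; try ring)
  · have p1 : ((-1:ℝ))^(n+1) = 1 := Even.neg_one_pow hn.add_one
    have p5 : ((-1:ℝ))^n = -1 := Odd.neg_one_pow hn
    simp only [if_neg (Nat.not_even_iff_odd.mpr hn)]
    constructor
    · have key : Tendsto (fun ε : ℝ =>
          ((1 + Real.exp (ε*(α+((n:ℝ)+1)))) * ((1 - Real.exp (ε*(α+β+((n:ℝ)+1))))/ε) *
            (1 - c * Real.exp (ε*((n:ℝ)+1)))) /
          ((1 + Real.exp (ε*(α+β+(2*(n:ℝ)+1)))) * ((1 - Real.exp (ε*(α+β+(2*(n:ℝ)+2))))/ε)))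
          (nhdsWithin 0 (Set.Ioi 0))
          (nhds ((2 * -(α+β+((n:ℝ)+1)) * (1 - c*1)) / (2 * -(α+β+(2*(n:ℝ)+2))))) := by
        refine Tendsto.div
          (((onePlusTendsto _).mul (slopeTendsto _)).mul
            (tendsto_const_nhds.sub (tendsto_const_nhds.mul (expTendsto _))))
          ((onePlusTendsto _).mul (slopeTendsto _)) ?_
        exact mul_ne_zero two_ne_zero (neg_ne_zero.mpr hdA)
      have hval : (2 * -(α+β+((n:ℝ)+1)) * (1 - c*1)) / (2 * -(α+β+(2*(n:ℝ)+2)))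
          = (1 - c) * ((n : ℝ) + α + β + 1) / (2 * (n : ℝ) + α + β + 2) := by
        rw [div_eq_div_iff (by exact mul_ne_zero two_ne_zero (neg_ne_zero.mpr hdA)) h2]
        ring
      rw [hval] at key
      refine Tendsto.congr' ?_ key
      filter_upwards [self_mem_nhdsWithin] with ε hε
      have hε0 : ε ≠ 0 := ne_of_gt hε
      have s : ∀ t u : ℝ, Real.exp (ε*(t+u)) = Real.exp (ε*t) * Real.exp (ε*u) :=
        fun t u => by rw [← Real.exp_add, mul_add]
      simp only [negexp_pow, p1, p2, p3]
      push_cast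
      rw [s (α+β) (2*(n:ℝ)+2), s (α+β) (2*(n:ℝ)+1), s (α+β) ((n:ℝ)+1), s α ((n:ℝ)+1), s α β]
      refine div_congr_eps hε0 ?_ ?_ <;> (field_simp; try ring)
    · have key : Tendsto (fun ε : ℝ =>
          Real.exp (ε*(α+((n:ℝ)+1))) * (1 + Real.exp (ε*(n:ℝ))) *
            (c + Real.exp (ε*(α+β+(n:ℝ)))) * ((1 - Real.exp (ε*(β+(n:ℝ))))/ε) /
          (((1 - Real.exp (ε*(α+β+2*(n:ℝ))))/ε) * (1 + Real.exp (ε*(α+β+(2*(n:ℝ)+1))))))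
          (nhdsWithin 0 (Set.Ioi 0))
          (nhds ((1 * 2 * (c + 1) * -(β+(n:ℝ))) / (-(α+β+2*(n:ℝ)) * 2))) := by
        refine Tendsto.div
          ((((expTendsto _).mul (onePlusTendsto _)).mul
            (tendsto_const_nhds.add (expTendsto _))).mul (slopeTendsto _))
          ((slopeTendsto _).mul (onePlusTendsto _)) ?_
        exact mul_ne_zero (neg_ne_zero.mpr hdC) two_ne_zero
      have hval : (1 * 2 * (c + 1) * -(β+(n:ℝ))) / (-(α+β+2*(n:ℝ)) * 2)
          = (1 + c) * ((n : ℝ) + β) / (2 * (n : ℝ) + α + β) := by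
        rw [div_eq_div_iff (by exact mul_ne_zero (neg_ne_zero.mpr hdC) two_ne_zero) h1]
        ring
      rw [hval] at key
      refine Tendsto.congr' ?_ key
      filter_upwards [self_mem_nhdsWithin] with ε hε
      have hε0 : ε ≠ 0 := ne_of_gt hε
      have s : ∀ t u : ℝ, Real.exp (ε*(t+u)) = Real.exp (ε*t) * Real.exp (ε*u) :=
        fun t u => by rw [← Real.exp_add, mul_add]
      simp only [negexp_pow, p1, p2, p4, p5]
      push_cast
      rw [s (α+β) (2*(n:ℝ)), s (α+β) (2*(n:ℝ)+1), s (α+β) ((n:ℝ)), s α ((n:ℝ)+1),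
        s β ((n:ℝ)), s α β]
      refine div_congr_eps hε0 ?_ ?_ <;> (field_simp; try ring)
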